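/- Let p be a prime, n ≥ 1, q = p^n. If α ∈ F_q is normal over F_p and c ∈ F_p satisfies Tr_{F_q/F_p}(α + c) = 0, then the F_p-order of α + c equals (x^n − 1)/(x − 1). -/

import Mathlib

open Polynomial

noncomputable section

/-- `h ∘ α := Σ a_i α^{p^i}` for `h = Σ a_i x^i ∈ F_p[x]` and `α` in an extension. -/
def circQ {K L : Type*} [Field K] [Field L] [Algebra K L] (q : ℕ) (f : K[X]) (α : L) : L :=
  ∑ i ∈ f.support, algebraMap K L (f.coeff i) * α ^ q ^ i

/-- `m` is the `F_p`-order of `α`: the monic generator of `{h : h ∘ α = 0}`. -/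
def IsOrd {K L : Type*} [Field K] [Field L] [Algebra K L] (q : ℕ) (m : K[X]) (α : L) : Prop :=
  m.Monic ∧ ∀ h : K[X], circQ q h α = 0 ↔ m ∣ h

/-- `β` is a normal element over `K`: `{β, β^q, …, β^{q^{n-1}}}` is a `K`-basis of `L`. -/
def IsNormalElem (K : Type*) {L : Type*} [Field K] [Field L] [Algebra K L]
    (q n : ℕ) (β : L) : Prop :=
  ∃ B : Module.Basis (Fin n) K L, ∀ i : Fin n, B i = β ^ q ^ (i : ℕ)


/-! Write `F` for the `q`-power Frobenius of `L` over `K`; then `h ∘ x = h(F) x`, so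
`(f * h) ∘ x = f ∘ (h ∘ x)`. Since `{α^{q^i}}` is a basis, no nonzero `h` of degree `< n` kills `α`,
while `X^n - 1` kills all of `L`; hence `Ord(α) = X^n - 1`. Constants are fixed by `F`, so
`(X - 1) ∘ (α + c) = (X - 1) ∘ α`. Thus `h ∘ (α + c) = 0` forces `(X^n - 1) ∣ h (X - 1)`, i.e.
`g ∣ h` for `g = (X^n - 1)/(X - 1) = 1 + X + ⋯ + X^{n-1}`, and `g ∘ (α + c)` is the trace,
which vanishes by hypothesis. -/

section Frobenius

variable {K L : Type*} [Field K] [Fintype K] [Field L] [Algebra K L] {q : ℕ}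

theorem circQ_eq_aeval (hq : Fintype.card K = q) (h : K[X]) (x : L) :
    circQ q h x = aeval (FiniteField.frobeniusAlgHom K L).toLinearMap h x := by
  subst hq
  simp [circQ, aeval_def, eval₂_eq_sum, Polynomial.sum_def, Module.End.pow_apply,
    FiniteField.coe_frobeniusAlgHom, pow_iterate, Module.algebraMap_end_apply, Algebra.smul_def]

theorem circQ_add (hq : Fintype.card K = q) (f h : K[X]) (x : L) :
    circQ q (f + h) x = circQ q f x + circQ q h x := by
  simp only [circQ_eq_aeval hq, map_add, LinearMap.add_apply]

theorem circQ_mul (hq : Fintype.card K = q) (f h : K[X]) (x : L) :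
    circQ q (f * h) x = circQ q f (circQ q h x) := by
  simp only [circQ_eq_aeval hq, map_mul, Module.End.mul_apply]

theorem circQ_zero_right (hq : Fintype.card K = q) (h : K[X]) : circQ q h (0 : L) = 0 := by
  rw [circQ_eq_aeval hq, map_zero]

theorem circQ_geom_sum (hq : Fintype.card K = q) (n : ℕ) (x : L) :
    circQ q (∑ i ∈ Finset.range n, (X : K[X]) ^ i) x = ∑ i ∈ Finset.range n, x ^ q ^ i := by
  subst hq
  simp [circQ_eq_aeval rfl, Module.End.pow_apply, FiniteField.coe_frobeniusAlgHom, pow_iterate]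

theorem circQ_X_sub_one_add_algebraMap (hq : Fintype.card K = q) (x : L) (c : K) :
    circQ q (X - 1 : K[X]) (x + algebraMap K L c) = circQ q (X - 1 : K[X]) x := by
  simp only [circQ_eq_aeval hq, map_sub, aeval_X, map_one, LinearMap.sub_apply,
    Module.End.one_apply, map_add, AlgHom.toLinearMap_apply, AlgHom.commutes]
  ring

theorem circQ_X_pow_finrank_sub_one [Finite L] (hq : Fintype.card K = q) (x : L) :
    circQ q (X ^ Module.finrank K L - 1 : K[X]) x = 0 := by
  have := Fintype.ofFinite L
  subst hq
  simp [circQ_eq_aeval rfl, Module.End.pow_apply, FiniteField.coe_frobeniusAlgHom, pow_iterate,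
    ← Module.card_eq_pow_finrank, FiniteField.pow_card]

end Frobenius

namespace IsNormalElem

variable {K L : Type*} [Field K] [Field L] [Algebra K L] {q n : ℕ} {α : L}

theorem ne_zero (hα : IsNormalElem K q n α) : n ≠ 0 := by
  obtain ⟨B, -⟩ := hα
  exact (Fin.pos_iff_nonempty.mpr B.index_nonempty).ne'

theorem finrank_eq (hα : IsNormalElem K q n α) : Module.finrank K L = n := by
  obtain ⟨B, -⟩ := hα
  simpa using Module.finrank_eq_card_basis B

theorem finite (hα : IsNormalElem K q n α) [Finite K] : Finite L := by
  obtain ⟨B, -⟩ := hα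
  have := Module.Finite.of_basis B
  exact Module.finite_of_finite K

theorem eq_zero_of_circQ_eq_zero (hα : IsNormalElem K q n α) {h : K[X]}
    (hdeg : h.natDegree < n) (hh : circQ q h α = 0) : h = 0 := by
  obtain ⟨B, hB⟩ := hα
  have hsum : ∑ i : Fin n, h.coeff i • B i = 0 := by
    change h.sum (fun i a => algebraMap K L a * α ^ q ^ i) = 0 at hh
    rw [← hh, sum_over_range' _ (by simp) n hdeg, ← Fin.sum_univ_eq_sum_range]
    simp [hB, Algebra.smul_def]
  have hcoeff := Fintype.linearIndependent_iff.mp B.linearIndependent _ hsum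
  ext i
  by_cases hi : i < n
  · simpa using hcoeff ⟨i, hi⟩
  · simpa using coeff_eq_zero_of_natDegree_lt (hdeg.trans_le (not_lt.mp hi))

theorem isOrd [Fintype K] (hq : Fintype.card K = q) (hα : IsNormalElem K q n α) :
    IsOrd q (X ^ n - 1 : K[X]) α := by
  have hmonic : (X ^ n - 1 : K[X]).Monic := by
    simpa using monic_X_pow_sub_C (1 : K) hα.ne_zero
  have hdeg : (X ^ n - 1 : K[X]).natDegree = n := by
    simpa using natDegree_X_pow_sub_C (n := n) (r := (1 : K))
  have := hα.finite
  have hker : ∀ x : L, circQ q (X ^ n - 1 : K[X]) x = 0 := by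
    rw [← hα.finrank_eq]
    exact circQ_X_pow_finrank_sub_one hq
  refine ⟨hmonic, fun h => ⟨fun hh => ?_, ?_⟩⟩
  · rw [← modByMonic_eq_zero_iff_dvd hmonic]
    refine hα.eq_zero_of_circQ_eq_zero ?_ ?_
    · refine (natDegree_modByMonic_lt h hmonic ?_).trans_eq hdeg
      exact ne_of_apply_ne natDegree (by simpa [hdeg] using hα.ne_zero)
    · rwa [← modByMonic_add_div h (X ^ n - 1), circQ_add hq, circQ_mul hq, hker, add_zero] at hh
  · rintro ⟨k, rfl⟩
    rw [circQ_mul hq, hker]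

end IsNormalElem

theorem IsOrd.of_mul {K L : Type*} [Field K] [Fintype K] [Field L] [Algebra K L] {q : ℕ}
    (hq : Fintype.card K = q) {f g : K[X]} {α β : L} (hα : IsOrd q (g * f) α) (hg : g.Monic)
    (hf : f ≠ 0) (hfβ : circQ q f β = circQ q f α) (hgβ : circQ q g β = 0) : IsOrd q g β := by
  refine ⟨hg, fun h => ⟨fun hh => ?_, ?_⟩⟩
  · have : circQ q (h * f) α = 0 := by
      rw [circQ_mul hq, ← hfβ, ← circQ_mul hq, mul_comm, circQ_mul hq, hh, circQ_zero_right hq]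
    exact (mul_dvd_mul_iff_right hf).mp ((hα.2 _).mp this)
  · rintro ⟨k, rfl⟩
    rw [mul_comm, circQ_mul hq, hgβ, circQ_zero_right hq]

theorem X_pow_sub_one_div_X_sub_one {K : Type*} [Field K] (n : ℕ) :
    (X ^ n - 1) / (X - 1) = ∑ i ∈ Finset.range n, (X : K[X]) ^ i :=
  (EuclideanDomain.eq_div_of_mul_eq_left (X_sub_C_ne_zero 1) (geom_sum_mul X n)).symm

theorem stmt_16_general (p n : ℕ) [Fact p.Prime]
    (L : Type*) [Field L] [Algebra (ZMod p) L]
    (α : L) (hα : IsNormalElem (ZMod p) p n α)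
    (c : ZMod p)
    (htr : ∑ i ∈ Finset.range n, (α + algebraMap (ZMod p) L c) ^ p ^ i = 0) :
    IsOrd p ((X ^ n - 1) / (X - 1) : (ZMod p)[X]) (α + algebraMap (ZMod p) L c) := by
  have hq := ZMod.card p
  rw [X_pow_sub_one_div_X_sub_one]
  refine IsOrd.of_mul hq (f := X - 1) ?_ (monic_geom_sum_X hα.ne_zero) (X_sub_C_ne_zero 1)
    (circQ_X_sub_one_add_algebraMap hq α c) (by rwa [circQ_geom_sum hq])
  rw [geom_sum_mul]
  exact hα.isOrd hq

theorem stmt_16 (p n : ℕ) [Fact p.Prime] (hn : 1 ≤ n)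
    (L : Type*) [Field L] [Algebra (ZMod p) L]
    (hrank : Module.finrank (ZMod p) L = n)
    (α : L) (hα : IsNormalElem (ZMod p) p n α)
    (c : ZMod p)
    (htr : ∑ i ∈ Finset.range n, (α + algebraMap (ZMod p) L c) ^ p ^ i = 0) :
    IsOrd p ((X ^ n - 1) / (X - 1) : (ZMod p)[X]) (α + algebraMap (ZMod p) L c) :=
  stmt_16_general p n L α hα c htr
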